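/- Suppose α is badly approximable, i.e., its partial quotients (a_k) are bounded. If β is a real number such that the distance from q_k β to the nearest integer tends to 0 as k → ∞ (where q_k are the continued fraction denominators of α), then there exists an integer n such that β − nα is an integer, i.e., β ≡ nα (mod 1). (In particular, the only possible eigenvalues e^{2πiβ} of the transformation T_α are the powers e^{2πinα}, n ∈ ℤ.) -/

import Mathlib

open scoped BigOperators

/-- The Gauss map `G(x) = 1/x - ⌊1/x⌋`. -/
noncomputable def gaussMap (x : ℝ) : ℝ := Int.fract (1 / x)

/-- The partial quotients of the continued fraction of `α`:
`a 0 = ⌊α⌋` and `a k = ⌊1 / G^[k-1] (fract α)⌋` for `k ≥ 1`. -/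
noncomputable def cfA (α : ℝ) : ℕ → ℤ
  | 0 => ⌊α⌋
  | k + 1 => ⌊1 / (gaussMap^[k] (Int.fract α))⌋

/-- Numerators of the convergents: `p 0 = 1`, `p 1 = a 0`,
`p k = a (k-1) * p (k-1) + p (k-2)`. -/
noncomputable def cfP (α : ℝ) : ℕ → ℤ
  | 0 => 1
  | 1 => cfA α 0
  | k + 2 => cfA α (k + 1) * cfP α (k + 1) + cfP α k

/-- Denominators of the convergents: `q 0 = 0`, `q 1 = 1`,
`q k = a (k-1) * q (k-1) + q (k-2)`. -/
noncomputable def cfQ (α : ℝ) : ℕ → ℤ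
  | 0 => 0
  | 1 => 1
  | k + 2 => cfA α (k + 1) * cfQ α (k + 1) + cfQ α k

/-- `ζ k = |q k * α - p k|`. -/
noncomputable def cfZeta (α : ℝ) (k : ℕ) : ℝ := |(cfQ α k : ℝ) * α - (cfP α k : ℝ)|

/-- `ε k = |α - p k / q k|`. -/
noncomputable def cfEps (α : ℝ) (k : ℕ) : ℝ := |α - (cfP α k : ℝ) / (cfQ α k : ℝ)|

/-!
Let `r k` be the integer nearest to `q k * β`. As the partial quotients are bounded, the integer
`a (k+1) * r (k+1) + r k - r (k+2)` eventually has absolute value less than `1`, so `r` eventually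
satisfies the recurrence of the convergents. Since `q k * p (k+1) - p k * q (k+1) = ±1`, every
integer solution of that recurrence is an integer combination `m * q + n * p`. Then
`q k * (β - n * α - m) = (q k * β - r k) - n * (q k * α - p k)` stays bounded while `q k → ∞`,
which forces `β = n * α + m`.
-/

open Filter Topology

lemma exists_mul_add_mul_eq_of_isUnit {R : Type*} [CommRing R] {a b c d : R}
    (hdet : IsUnit (a * d - b * c)) (u v : R) :
    ∃ m n : R, m * a + n * b = u ∧ m * c + n * d = v := by
  obtain ⟨e, he⟩ := hdet.exists_right_inv
  exact ⟨e * (u * d - v * b), e * (v * a - u * c),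
    by linear_combination u * he, by linear_combination v * he⟩

lemma eq_of_recurrence {R : Type*} [Semiring R] {a x y : ℕ → R} {K : ℕ}
    (hx : ∀ k ≥ K, x (k + 2) = a k * x (k + 1) + x k)
    (hy : ∀ k ≥ K, y (k + 2) = a k * y (k + 1) + y k)
    (h₀ : x K = y K) (h₁ : x (K + 1) = y (K + 1)) :
    ∀ k ≥ K, x k = y k := by
  suffices h : ∀ k ≥ K, x k = y k ∧ x (k + 1) = y (k + 1) from fun k hk => (h k hk).1
  intro k hk
  induction k, hk using Nat.le_induction with
  | base => exact ⟨h₀, h₁⟩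
  | succ k hk ih => exact ⟨ih.2, by rw [hx k hk, hy k hk, ih.1, ih.2]⟩

/-- The defect `a k * r (k + 1) + r k - r (k + 2)` is an integer tending to `0`. -/
lemma eventually_recurrence_of_tendsto {a q r : ℕ → ℤ} {β M : ℝ}
    (ha : ∀ k, |(a k : ℝ)| ≤ M) (hq : ∀ k, q (k + 2) = a k * q (k + 1) + q k)
    (hr : Tendsto (fun k => (q k : ℝ) * β - r k) atTop (𝓝 0)) :
    ∀ᶠ k in atTop, r (k + 2) = a k * r (k + 1) + r k := by
  set δ : ℕ → ℝ := fun k => (q k : ℝ) * β - r k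
  have hdefect : ∀ k, ((a k * r (k + 1) + r k - r (k + 2) : ℤ) : ℝ)
      = δ (k + 2) - a k * δ (k + 1) - δ k := fun k => by
    simp only [δ, hq]; push_cast; ring
  have hbdd : IsBoundedUnder (· ≤ ·) atTop ((‖·‖) ∘ fun k => (a k : ℝ)) :=
    isBoundedUnder_of ⟨M, fun k => ha k⟩
  have hlim : Tendsto (fun k => δ (k + 2) - a k * δ (k + 1) - δ k) atTop (𝓝 0) := by
    have h2 := hr.comp (tendsto_add_atTop_nat 2)
    have h1 := isBoundedUnder_le_mul_tendsto_zero hbdd (hr.comp (tendsto_add_atTop_nat 1))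
    simpa using (h2.sub h1).sub hr
  filter_upwards [hlim.eventually (Metric.ball_mem_nhds 0 one_pos)] with k hk
  rw [dist_zero_right, Real.norm_eq_abs, ← hdefect, ← Int.cast_abs] at hk
  have := Int.abs_lt_one_iff.1 (by exact_mod_cast hk)
  omega

lemma eq_zero_of_abs_mul_le {u : ℕ → ℝ} (hu : Tendsto u atTop atTop) {c C : ℝ}
    (h : ∀ᶠ k in atTop, |c * u k| ≤ C) : c = 0 := by
  by_contra hc
  obtain ⟨k, hk, hkC⟩ :=
    ((hu.const_mul_atTop (abs_pos.2 hc)).eventually_gt_atTop C).and h |>.exists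
  rw [abs_mul] at hkC
  nlinarith [le_abs_self (u k), abs_nonneg c]

lemma Irrational.fract_mem_Ioo {x : ℝ} (hx : Irrational x) : Int.fract x ∈ Set.Ioo 0 1 :=
  ⟨Int.fract_pos.2 fun h => hx.ne_int _ h, Int.fract_lt_one x⟩

lemma Irrational.fract {x : ℝ} (hx : Irrational x) : Irrational (Int.fract x) :=
  hx.sub_intCast _

section ContinuedFraction

variable {α : ℝ}

lemma Irrational.gaussMap_iterate_fract (hα : Irrational α) (k : ℕ) :
    Irrational (gaussMap^[k] (Int.fract α)) := by
  induction k with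
  | zero => exact hα.fract
  | succ k ih =>
    rw [Function.iterate_succ_apply', gaussMap, one_div]
    exact ih.inv.fract

lemma gaussMap_iterate_fract_mem_Ioo (hα : Irrational α) (k : ℕ) :
    gaussMap^[k] (Int.fract α) ∈ Set.Ioo 0 1 := by
  cases k with
  | zero => exact hα.fract_mem_Ioo
  | succ k =>
    rw [Function.iterate_succ_apply', gaussMap, one_div]
    exact (hα.gaussMap_iterate_fract k).inv.fract_mem_Ioo

lemma one_le_cfA_succ (hα : Irrational α) (k : ℕ) : 1 ≤ cfA α (k + 1) := by
  obtain ⟨h0, h1⟩ := gaussMap_iterate_fract_mem_Ioo hα k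
  rw [cfA, Int.le_floor, Int.cast_one]
  exact one_le_one_div h0 h1.le

lemma gaussMap_iterate_fract_succ (α : ℝ) (k : ℕ) :
    gaussMap^[k + 1] (Int.fract α) = 1 / gaussMap^[k] (Int.fract α) - cfA α (k + 1) := by
  rw [Function.iterate_succ_apply', gaussMap, Int.fract, cfA]

lemma cfQ_add_two (α : ℝ) (k : ℕ) : cfQ α (k + 2) = cfA α (k + 1) * cfQ α (k + 1) + cfQ α k :=
  rfl

lemma cfP_add_two (α : ℝ) (k : ℕ) : cfP α (k + 2) = cfA α (k + 1) * cfP α (k + 1) + cfP α k :=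
  rfl

lemma cfQ_mul_cfP_succ_sub (α : ℝ) (k : ℕ) :
    cfQ α k * cfP α (k + 1) - cfP α k * cfQ α (k + 1) = (-1) ^ (k + 1) := by
  induction k with
  | zero => simp [cfQ, cfP]
  | succ k ih =>
    rw [cfQ_add_two, cfP_add_two]
    linear_combination -ih

lemma le_cfQ_succ (hα : Irrational α) (k : ℕ) : (k : ℤ) ≤ cfQ α (k + 1) := by
  suffices h : ∀ k : ℕ, 1 ≤ cfQ α (k + 1) ∧ (k : ℤ) + 1 ≤ cfQ α (k + 2) by
    cases k with
    | zero => simp [cfQ]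
    | succ k => push_cast; exact (h k).2
  intro k
  induction k with
  | zero => exact ⟨le_rfl, by simpa [cfQ] using one_le_cfA_succ hα 0⟩
  | succ k ih =>
    have hq : cfQ α (k + 2) ≤ cfA α (k + 2) * cfQ α (k + 2) :=
      le_mul_of_one_le_left (by omega) (one_le_cfA_succ hα (k + 1))
    have hrec : cfQ α (k + 3) = cfA α (k + 2) * cfQ α (k + 2) + cfQ α (k + 1) := rfl
    show 1 ≤ cfQ α (k + 2) ∧ ((k + 1 : ℕ) : ℤ) + 1 ≤ cfQ α (k + 3)
    push_cast
    exact ⟨by omega, by omega⟩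

lemma tendsto_cfQ_atTop (hα : Irrational α) :
    Tendsto (fun k => (cfQ α k : ℝ)) atTop atTop := by
  rw [← tendsto_add_atTop_iff_nat 1]
  exact tendsto_atTop_mono (fun k => by exact_mod_cast le_cfQ_succ hα k)
    tendsto_natCast_atTop_atTop

lemma cfQ_mul_sub_cfP_succ (hα : Irrational α) (k : ℕ) :
    (cfQ α (k + 1) : ℝ) * α - cfP α (k + 1)
      = -gaussMap^[k] (Int.fract α) * ((cfQ α k : ℝ) * α - cfP α k) := by
  induction k with
  | zero =>
    simp only [cfQ, cfP, cfA, Function.iterate_zero, id, Int.fract]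
    push_cast
    ring
  | succ k ih =>
    have hx := one_div_mul_cancel (gaussMap_iterate_fract_mem_Ioo hα k).1.ne'
    rw [cfQ_add_two, cfP_add_two, gaussMap_iterate_fract_succ, ih]
    push_cast
    linear_combination (cfA α (k + 1) : ℝ) * ih - ((cfQ α k : ℝ) * α - cfP α k) * hx

lemma cfZeta_le_one (hα : Irrational α) (k : ℕ) : cfZeta α k ≤ 1 := by
  induction k with
  | zero => simp [cfZeta, cfQ, cfP]
  | succ k ih =>
    obtain ⟨h0, h1⟩ := gaussMap_iterate_fract_mem_Ioo hα k
    rw [cfZeta, cfQ_mul_sub_cfP_succ hα, abs_mul, abs_neg, abs_of_pos h0]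
    exact mul_le_one₀ h1.le (abs_nonneg _) ih

lemma eq_mul_add_of_eventually_eq_cfQ_cfP (hα : Irrational α) {β C : ℝ} {r : ℕ → ℤ} {m n : ℤ}
    (hr : ∀ᶠ k in atTop, r k = m * cfQ α k + n * cfP α k)
    (hδ : ∀ᶠ k in atTop, |(cfQ α k : ℝ) * β - r k| ≤ C) :
    β = n * α + m := by
  refine sub_eq_zero.1 (eq_zero_of_abs_mul_le (tendsto_cfQ_atTop hα) (C := C + |(n : ℝ)|) ?_)
  filter_upwards [hr, hδ] with k hrk hδk
  have hsplit : (β - (n * α + m)) * cfQ α k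
      = ((cfQ α k : ℝ) * β - r k) - n * ((cfQ α k : ℝ) * α - cfP α k) := by
    rw [hrk]; push_cast; ring
  calc |(β - (n * α + m)) * cfQ α k|
      ≤ |(cfQ α k : ℝ) * β - r k| + |(n : ℝ)| * cfZeta α k := by
        rw [hsplit, cfZeta, ← abs_mul]; exact abs_sub _ _
    _ ≤ C + |(n : ℝ)| :=
        add_le_add hδk (mul_le_of_le_one_right (abs_nonneg _) (cfZeta_le_one hα k))

end ContinuedFraction

/-- If `α` is badly approximable (bounded partial quotients) and `β` is a real
number such that the distance from `q k * β` to the nearest integer tends to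
`0`, then `β ≡ n α (mod 1)` for some integer `n`. -/
theorem unique_eigenvalues (α : ℝ) (hα : Irrational α)
    (hbad : ∃ M : ℤ, ∀ k : ℕ, cfA α k ≤ M) (β : ℝ)
    (hβ : Filter.Tendsto
      (fun k : ℕ => |(cfQ α k : ℝ) * β - (round ((cfQ α k : ℝ) * β) : ℝ)|)
      Filter.atTop (nhds 0)) :
    ∃ n m : ℤ, β = n * α + m := by
  obtain ⟨M, hM⟩ := hbad
  set r : ℕ → ℤ := fun k => round ((cfQ α k : ℝ) * β)
  have hδ : Tendsto (fun k => (cfQ α k : ℝ) * β - r k) atTop (𝓝 0) :=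
    (tendsto_zero_iff_abs_tendsto_zero _).2 hβ
  have ha : ∀ k, |(cfA α (k + 1) : ℝ)| ≤ M := fun k => by
    have := one_le_cfA_succ hα k
    rw [abs_of_nonneg (by exact_mod_cast zero_le_one.trans this)]
    exact_mod_cast hM (k + 1)
  obtain ⟨K, hK⟩ :=
    (eventually_recurrence_of_tendsto ha (cfQ_add_two α) hδ).exists_forall_of_atTop
  have hdet : IsUnit (cfQ α K * cfP α (K + 1) - cfP α K * cfQ α (K + 1)) := by
    rw [cfQ_mul_cfP_succ_sub]; exact isUnit_neg_one.pow _
  obtain ⟨m, n, hK₀, hK₁⟩ := exists_mul_add_mul_eq_of_isUnit hdet (r K) (r (K + 1))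
  have hr : ∀ k ≥ K, r k = m * cfQ α k + n * cfP α k :=
    eq_of_recurrence hK (fun k _ => by rw [cfQ_add_two, cfP_add_two]; ring) hK₀.symm hK₁.symm
  exact ⟨n, m, eq_mul_add_of_eventually_eq_cfQ_cfP hα (eventually_atTop.2 ⟨K, hr⟩)
    (hβ.eventually (eventually_le_nhds zero_lt_one))⟩
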